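/- For all t ≥ T := √(2r²/(9μ)), one has (1/2)·t^{2r/3}·‖ẋ(t) + (2r/(3t))·(x(t) − x_*)‖² ≤ E(T). -/

import Mathlib

/-!
Along the ODE, `E'(t) = (2r/3) t^(2r/3-1) (f(x) - f_* - ⟪∇f(x), x - x_*⟫ + (r² - 9)/(9t²) ‖x - x_*‖²)`.
By strong convexity the bracket is at most `((r² - 9)/(9t²) - μ/2) ‖x - x_*‖²`, which is `≤ 0` as
soon as `2r² ≤ 9μt²`, i.e. `t ≥ T`; so `E` decreases on `[T, ∞)`. For such `t` quadratic growth
`f(x) - f_* ≥ (μ/2) ‖x - x_*‖²` also makes the potential part of `E(t)` nonnegative, whence the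
kinetic part is at most `E(t) ≤ E(T)`.
-/

open scoped RealInnerProductSpace

variable {F : Type*} [NormedAddCommGroup F] [InnerProductSpace ℝ F]

section StrongConvexity

variable {f : F → ℝ} {f' : F → F} {μ : ℝ}

theorem sub_sub_inner_le_of_strongConvex
    (hsc : ∀ p q, f q ≥ f p + ⟪f' p, q - p⟫ + μ / 2 * ‖q - p‖ ^ 2) (p q : F) :
    f p - f q - ⟪f' p, p - q⟫ ≤ -(μ / 2) * ‖p - q‖ ^ 2 := by
  have h := hsc p q
  rw [← neg_sub p q, inner_neg_right, norm_neg] at h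
  linarith

theorem mul_sq_norm_sub_le_sub_of_strongConvex
    (hsc : ∀ p q, f q ≥ f p + ⟪f' p, q - p⟫ + μ / 2 * ‖q - p‖ ^ 2) {xstar : F}
    (hg : f' xstar = 0) (p : F) : μ / 2 * ‖p - xstar‖ ^ 2 ≤ f p - f xstar := by
  have h := hsc xstar p
  rw [hg, inner_zero_left] at h
  linarith

end StrongConvexity

theorem two_mul_sq_le_of_sqrt_le {μ r t : ℝ} (hμ : 0 < μ) (ht : √(2 * r ^ 2 / (9 * μ)) ≤ t) :
    2 * r ^ 2 ≤ 9 * μ * t ^ 2 := by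
  have h := pow_le_pow_left₀ (Real.sqrt_nonneg _) ht 2
  rw [Real.sq_sqrt (by positivity), div_le_iff₀ (by positivity)] at h
  linarith

noncomputable def lyapunov (f : F → ℝ) (xstar : F) (r : ℝ) (x x' : ℝ → F) (t : ℝ) : ℝ :=
  t ^ (2 * r / 3) * (f (x t) - f xstar - (r ^ 2 - 3 * r) / (9 * t ^ 2) * ‖x t - xstar‖ ^ 2)
    + 1 / 2 * t ^ (2 * r / 3) * ‖x' t + (2 * r / (3 * t)) • (x t - xstar)‖ ^ 2

theorem kinetic_le_lyapunov {f : F → ℝ} {μ r t : ℝ} {xstar : F} {x x' : ℝ → F}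
    (hgrowth : μ / 2 * ‖x t - xstar‖ ^ 2 ≤ f (x t) - f xstar)
    (hr : 0 ≤ r) (ht : 0 < t) (hrt : 2 * r ^ 2 ≤ 9 * μ * t ^ 2) :
    1 / 2 * t ^ (2 * r / 3) * ‖x' t + (2 * r / (3 * t)) • (x t - xstar)‖ ^ 2
      ≤ lyapunov f xstar r x x' t := by
  have hcoeff : (r ^ 2 - 3 * r) / (9 * t ^ 2) ≤ μ / 2 := by
    rw [div_le_iff₀ (by positivity)]
    nlinarith
  have hpot : 0 ≤ f (x t) - f xstar - (r ^ 2 - 3 * r) / (9 * t ^ 2) * ‖x t - xstar‖ ^ 2 := by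
    nlinarith [mul_le_mul_of_nonneg_right hcoeff (sq_nonneg ‖x t - xstar‖)]
  unfold lyapunov
  linarith [mul_nonneg (Real.rpow_nonneg ht.le (2 * r / 3)) hpot]

variable [CompleteSpace F]

theorem IsLocalMin.hasGradientAt_eq_zero {f : F → ℝ} {g p : F} (h : IsLocalMin f p)
    (hf : HasGradientAt f g p) : g = 0 :=
  (InnerProductSpace.toDual ℝ F).map_eq_zero_iff.1 (h.hasFDerivAt_eq_zero hf.hasFDerivAt)

theorem HasGradientAt.comp_hasDerivAt {f : F → ℝ} {g : F} {x : ℝ → F} {v : F} {t : ℝ}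
    (hf : HasGradientAt f g (x t)) (hx : HasDerivAt x v t) :
    HasDerivAt (fun s => f (x s)) ⟪g, v⟫ t :=
  hf.hasFDerivAt.comp_hasDerivAt t hx

theorem hasDerivAt_lyapunov {f : F → ℝ} {g xstar a : F} {r s : ℝ} {x x' : ℝ → F} (hs : 0 < s)
    (hf : HasGradientAt f g (x s)) (hx : HasDerivAt x (x' s) s) (hx' : HasDerivAt x' a s)
    (hode : a + (r / s) • x' s + g = 0) :
    HasDerivAt (lyapunov f xstar r x x')
      (2 * r / 3 * s ^ (2 * r / 3 - 1) *
        (f (x s) - f xstar - ⟪g, x s - xstar⟫ + (r ^ 2 - 9) / (9 * s ^ 2) * ‖x s - xstar‖ ^ 2)) s := by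
  have hpow : HasDerivAt (fun s : ℝ => s ^ (2 * r / 3)) (2 * r / 3 * s ^ (2 * r / 3 - 1)) s :=
    Real.hasDerivAt_rpow_const (Or.inl hs.ne')
  have hdist : HasDerivAt (fun s => x s - xstar) (x' s) s := hx.sub_const xstar
  have hcoeff := (hasDerivAt_const s (r ^ 2 - 3 * r)).div ((hasDerivAt_pow 2 s).const_mul 9)
    (by positivity)
  have hk := (hasDerivAt_const s (2 * r)).div ((hasDerivAt_id s).const_mul 3) (by positivity)
  have hvel := hx'.add (hk.smul hdist)
  have h := (hpow.mul (((hf.comp_hasDerivAt hx).sub_const (f xstar)).sub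
    (hcoeff.mul hdist.norm_sq))).add ((hpow.const_mul (1 / 2 : ℝ)).mul hvel.norm_sq)
  refine h.congr_deriv ?_
  simp only [Pi.add_apply, Pi.sub_apply, Pi.mul_apply, Pi.div_apply, Pi.smul_apply', id]
  have ha : a = -((r / s) • x' s) + -g := by rw [← sub_eq_zero, ← hode]; abel
  rw [ha, Real.rpow_sub hs, Real.rpow_one, ← real_inner_self_eq_norm_sq,
    ← real_inner_self_eq_norm_sq]
  simp only [inner_add_left, inner_add_right,
    inner_neg_right, real_inner_smul_left, real_inner_smul_right,
    real_inner_comm (x' s) (x s - xstar), real_inner_comm g (x s - xstar),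
    real_inner_comm g (x' s)]
  field_simp
  ring

theorem lyapunov_antitoneOn {f : F → ℝ} {f' : F → F} {μ r T : ℝ} {xstar : F} {x x' x'' : ℝ → F}
    (hsc : ∀ p q, f q ≥ f p + ⟪f' p, q - p⟫ + μ / 2 * ‖q - p‖ ^ 2)
    (hf' : ∀ p, HasGradientAt f (f' p) p)
    (hx : ∀ t > (0:ℝ), HasDerivAt x (x' t) t) (hx' : ∀ t > (0:ℝ), HasDerivAt x' (x'' t) t)
    (hode : ∀ t > (0:ℝ), x'' t + (r / t) • x' t + f' (x t) = 0)
    (hr : 0 ≤ r) (hT : 0 < T) (hrT : 2 * r ^ 2 ≤ 9 * μ * T ^ 2) :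
    AntitoneOn (lyapunov f xstar r x x') (Set.Ici T) := by
  have hderiv : ∀ s ∈ Set.Ici T, HasDerivAt (lyapunov f xstar r x x') _ s := fun s hs =>
    have hs : 0 < s := hT.trans_le hs
    hasDerivAt_lyapunov hs (hf' (x s)) (hx s hs) (hx' s hs) (hode s hs)
  refine antitoneOn_of_hasDerivWithinAt_nonpos (convex_Ici T)
    (fun s hs => (hderiv s hs).continuousAt.continuousWithinAt)
    (fun s hs => (hderiv s (interior_subset hs)).hasDerivWithinAt) fun s hs => ?_
  rw [interior_Ici] at hs
  have hs0 : 0 < s := hT.trans hs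
  have hrs : 2 * r ^ 2 ≤ 9 * μ * s ^ 2 := by
    have hμ : 0 ≤ μ := by nlinarith [sq_nonneg r, pow_pos hT 2]
    nlinarith [mul_le_mul_of_nonneg_left (pow_le_pow_left₀ hT.le hs.le 2) hμ]
  have hcoeff : (r ^ 2 - 9) / (9 * s ^ 2) ≤ μ / 2 := by
    rw [div_le_iff₀ (by positivity)]
    nlinarith
  refine mul_nonpos_of_nonneg_of_nonpos (by positivity) ?_
  nlinarith [sub_sub_inner_le_of_strongConvex hsc (x s) xstar,
    mul_le_mul_of_nonneg_right hcoeff (sq_nonneg ‖x s - xstar‖)]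

/-- Inequality (18) in the proof of Lemma 5: for `t ≥ T := √(2r²/(9μ))`,
`(1/2) t^(2r/3) ‖ẋ(t) + (2r/(3t))(x t - x_*)‖² ≤ E(T)`. -/
theorem stmt_5
{n : ℕ} (μ r : ℝ) (hμ : 0 < μ) (hr : 0 < r)
    (f : EuclideanSpace ℝ (Fin n) → ℝ)
    (f' : EuclideanSpace ℝ (Fin n) → EuclideanSpace ℝ (Fin n))
    (hf' : ∀ p, HasGradientAt f (f' p) p)
    (hsc : ∀ p q, f q ≥ f p + ⟪f' p, q - p⟫ + μ / 2 * ‖q - p‖ ^ 2)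
    (xstar : EuclideanSpace ℝ (Fin n)) (hmin : ∀ p, f xstar ≤ f p)
    (x x' x'' : ℝ → EuclideanSpace ℝ (Fin n))
    (hx : ∀ t > (0:ℝ), HasDerivAt x (x' t) t)
    (hx' : ∀ t > (0:ℝ), HasDerivAt x' (x'' t) t)
    (hode : ∀ t > (0:ℝ), x'' t + (r / t) • x' t + f' (x t) = 0)
(E : ℝ → ℝ)
    (hE : ∀ t, E t
        = t ^ (2 * r / 3) * (f (x t) - f xstar - (r ^ 2 - 3 * r) / (9 * t ^ 2) * ‖x t - xstar‖ ^ 2)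
          + 1 / 2 * t ^ (2 * r / 3) * ‖x' t + (2 * r / (3 * t)) • (x t - xstar)‖ ^ 2) :
    ∀ t, Real.sqrt (2 * r ^ 2 / (9 * μ)) ≤ t →
      1 / 2 * t ^ (2 * r / 3) * ‖x' t + (2 * r / (3 * t)) • (x t - xstar)‖ ^ 2
        ≤ E (Real.sqrt (2 * r ^ 2 / (9 * μ))) := by
  intro t ht
  set T := √(2 * r ^ 2 / (9 * μ))
  have hT : 0 < T := Real.sqrt_pos.2 (by positivity)
  have hgrad : f' xstar = 0 :=
    ((isMinOn_univ_iff.2 hmin).isLocalMin Filter.univ_mem).hasGradientAt_eq_zero (hf' xstar)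
  rw [show E = lyapunov f xstar r x x' from funext hE]
  calc _ ≤ lyapunov f xstar r x x' t :=
        kinetic_le_lyapunov (mul_sq_norm_sub_le_sub_of_strongConvex hsc hgrad (x t)) hr.le
          (hT.trans_le ht) (two_mul_sq_le_of_sqrt_le hμ ht)
    _ ≤ lyapunov f xstar r x x' T :=
        lyapunov_antitoneOn hsc hf' hx hx' hode hr.le hT (two_mul_sq_le_of_sqrt_le hμ le_rfl)
          Set.self_mem_Ici ht ht
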